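/- Let M be an n×n quaternionic matrix and h a nonzero quaternion such that every entry of N := (h⁻¹·I_n)·M·(h·I_n) (i.e. entrywise conjugation x ↦ h⁻¹·x·h) lies in the complex subfield ℂ of ℍ. Regarding N as a complex n×n matrix, for every λ ∈ ℂ one has det(λ·I_{2n} − ψ(M)) = det(λ·I_n − N) · det(λ·I_n − conj(N)), where conj(N) is the entrywise complex conjugate of N. -/

import Mathlib

noncomputable section

/-- Simplex part of a quaternion: `q = Sc q + j * Pc q`. -/
def Sc (q : Quaternion ℝ) : ℂ := ⟨q.re, q.imI⟩

/-- Perplex part of a quaternion: `q = Sc q + j * Pc q`. -/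
def Pc (q : Quaternion ℝ) : ℂ := ⟨q.imJ, -q.imK⟩

/-- The map ψ sending a quaternionic matrix `M = M^S + j·M^P` (symplectic decomposition)
to the complex block matrix `[[M^S, -conj(M^P)], [M^P, conj(M^S)]]`. -/
def psi {I J : Type*} (M : Matrix I J (Quaternion ℝ)) :
    Matrix (I ⊕ I) (J ⊕ J) ℂ :=
  Matrix.fromBlocks (M.map Sc) (-((M.map Pc).map (starRingEnd ℂ)))
    (M.map Pc) ((M.map Sc).map (starRingEnd ℂ))

/-!
Since `ψ` is multiplicative, conjugating `M` by the invertible scalar matrix `h • 1` conjugates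
`ψ M` and so leaves its characteristic polynomial unchanged. The conjugated matrix has complex
entries, so its perplex part vanishes and its image under `ψ` is block diagonal with blocks
`N` and `conj N`.
-/

open Matrix

lemma Sc_add (a b : Quaternion ℝ) : Sc (a + b) = Sc a + Sc b := by
  apply Complex.ext <;> simp [Sc]

lemma Pc_add (a b : Quaternion ℝ) : Pc (a + b) = Pc a + Pc b := by
  apply Complex.ext <;> simp [Pc]; ring

-- From `j * z = conj z * j` for `z ∈ ℂ`.
lemma Sc_mul (a b : Quaternion ℝ) :
    Sc (a * b) = Sc a * Sc b - starRingEnd ℂ (Pc a) * Pc b := by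
  apply Complex.ext <;> simp [Sc, Pc] <;> ring

lemma Pc_mul (a b : Quaternion ℝ) :
    Pc (a * b) = starRingEnd ℂ (Sc a) * Pc b + Pc a * Sc b := by
  apply Complex.ext <;> simp [Sc, Pc] <;> ring

lemma Sc_sum {ι : Type*} (s : Finset ι) (f : ι → Quaternion ℝ) :
    Sc (∑ x ∈ s, f x) = ∑ x ∈ s, Sc (f x) :=
  map_sum (AddMonoidHom.mk' Sc Sc_add) f s

lemma Pc_sum {ι : Type*} (s : Finset ι) (f : ι → Quaternion ℝ) :
    Pc (∑ x ∈ s, f x) = ∑ x ∈ s, Pc (f x) :=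
  map_sum (AddMonoidHom.mk' Pc Pc_add) f s

lemma Pc_eq_zero_iff (q : Quaternion ℝ) : Pc q = 0 ↔ q.imJ = 0 ∧ q.imK = 0 := by
  simp [Pc, Complex.ext_iff]

lemma psi_mul {I J K : Type*} [Fintype J] (A : Matrix I J (Quaternion ℝ))
    (B : Matrix J K (Quaternion ℝ)) : psi (A * B) = psi A * psi B := by
  ext (i | i) (k | k) <;>
    simp [psi, mul_apply, Fintype.sum_sum_type, Sc_sum, Pc_sum, Sc_mul, Pc_mul,
      Finset.sum_add_distrib, sub_eq_add_neg, mul_comm] <;> abel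

lemma psi_eq_fromBlocks_of_Pc_eq_zero {I J : Type*} (M : Matrix I J (Quaternion ℝ))
    (hM : M.map Pc = 0) :
    psi M = fromBlocks (M.map Sc) 0 0 ((M.map Sc).map (starRingEnd ℂ)) := by
  simp [psi, hM]

lemma charpoly_psi_units_conj {n : Type*} [Fintype n] [DecidableEq n]
    (u : (Matrix n n (Quaternion ℝ))ˣ) (M : Matrix n n (Quaternion ℝ)) :
    (psi (u⁻¹ * M * u : Matrix n n (Quaternion ℝ))).charpoly = (psi M).charpoly := by
  rw [psi_mul, psi_mul, mul_assoc, charpoly_mul_comm, mul_assoc, ← psi_mul, ← psi_mul,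
    Units.mul_inv, mul_one]

/-- let M be an n×n quaternionic matrix and h a nonzero quaternion such that
every entry of N := h⁻¹·M·h (entrywise conjugation) lies in the complex subfield ℂ ⊆ ℍ
(its j and k components vanish). Regarding N as the complex matrix with entries
Sc(h⁻¹·M_{rs}·h), for every λ ∈ ℂ one has
det(λI_{2n} − ψ(M)) = det(λI_n − N)·det(λI_n − conj(N)). -/
theorem psi_charpoly_of_complex_conjugated (n : ℕ)
    (M : Matrix (Fin n) (Fin n) (Quaternion ℝ)) (h : Quaternion ℝ) (hh : h ≠ 0)
    (hcplx : ∀ r s : Fin n,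
      (h⁻¹ * M r s * h).imJ = 0 ∧ (h⁻¹ * M r s * h).imK = 0)
    (N : Matrix (Fin n) (Fin n) ℂ) (hN : ∀ r s : Fin n, N r s = Sc (h⁻¹ * M r s * h)) :
    ∀ lam : ℂ,
      (lam • (1 : Matrix (Fin n ⊕ Fin n) (Fin n ⊕ Fin n) ℂ) - psi M).det =
        (lam • (1 : Matrix (Fin n) (Fin n) ℂ) - N).det *
          (lam • (1 : Matrix (Fin n) (Fin n) ℂ) - N.map (starRingEnd ℂ)).det := by
  intro lam
  set u := Units.map (scalar (Fin n) : Quaternion ℝ →+* _).toMonoidHom (Units.mk0 h hh)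
  have hconj : ∀ r s, (u⁻¹ * M * u : Matrix (Fin n) (Fin n) (Quaternion ℝ)) r s =
      h⁻¹ * M r s * h := by
    intro r s
    simp [u, Units.val_inv_eq_inv_val]
  have hpsi : psi (u⁻¹ * M * u : Matrix (Fin n) (Fin n) (Quaternion ℝ)) =
      fromBlocks N 0 0 (N.map (starRingEnd ℂ)) := by
    have hN' : (u⁻¹ * M * u : Matrix (Fin n) (Fin n) (Quaternion ℝ)).map Sc = N := by
      ext r s; simp [hconj, hN]
    rw [psi_eq_fromBlocks_of_Pc_eq_zero, hN']
    ext r s; simpa [hconj, Pc_eq_zero_iff] using hcplx r s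
  have hcharpoly : (psi M).charpoly = N.charpoly * (N.map (starRingEnd ℂ)).charpoly := by
    rw [← charpoly_psi_units_conj u, hpsi, charpoly_fromBlocks_zero₁₂]
  simp only [smul_one_eq_diagonal, ← scalar_apply, ← eval_charpoly, hcharpoly,
    Polynomial.eval_mul]
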